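/- arXiv:math/0503224 — 2 statements merged into one kernel-verified Lean document; each statement's English description precedes it below -/
import Mathlib

section
/- Write N = 2n + r with r ∈ {0,1}, and let π be a link pattern (involution of {1,…,N} with exactly r fixed points). Let t and t' be diagonal matrices with diagonal entries t_1,…,t_N and t'_1,…,t'_N, and let P ∈ M_N(ℂ) satisfy P_{ii} = 1 for all i. If P • (π̲ t) = (π̲ t') • P, then t_i = t'_i for every i with π(i) ≠ i; in particular, each orbit of the group U = {P : P_{ii} = 1 for all i} acting on E by •-conjugation contains at most one matrix of the form π̲ t. -/
open Matrix BigOperators Finset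

/-- `cyc3 i j k` : the sequence `(i,j,k)` of indices is cyclically ordered `⟨i ≤ j ≤ k⟩`,
i.e. some cyclic rotation of it is weakly increasing, with all entries required to be
equal when the first and last entries coincide. -/
def cyc3 {N : ℕ} (i j k : Fin N) : Prop :=
  if i = k then j = i
  else (i ≤ j ∧ j ≤ k) ∨ (j ≤ k ∧ k ≤ i) ∨ (k ≤ i ∧ i ≤ j)

instance cyc3.dec {N : ℕ} (i j k : Fin N) : Decidable (cyc3 i j k) := by
  unfold cyc3; infer_instance

/-- The degenerate product `•` on `N × N` complex matrices:
`(P • Q)_{ik} = ∑_{j : ⟨i ≤ j ≤ k⟩} P_{ij} Q_{jk}`. -/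
noncomputable def cprod {N : ℕ} (P Q : Matrix (Fin N) (Fin N) ℂ) :
    Matrix (Fin N) (Fin N) ℂ :=
  Matrix.of fun i k => ∑ j ∈ Finset.univ.filter (fun j => cyc3 i j k), P i j * Q j k

/-! Compare the `(π i, i)` entries of `P • π̲ t = π̲ t' • P`. Since `π̲ t` has at most one nonzero
entry in each row and column, the sum defining `(P • π̲ t)_{π i, i}` collapses to the term
`j = π i`, namely `P_{π i, π i} t_i = t_i`, and that of `(π̲ t' • P)_{π i, i}` to the term
`j = i`, namely `t'_i P_{i i} = t'_i`. Neither term is filtered out, because both endpoints of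
a triple are always cyclically between them. -/

variable {N : ℕ}

theorem cyc3_left (i k : Fin N) : cyc3 i i k := by
  unfold cyc3
  split_ifs with hik
  · rfl
  · rcases le_total i k with h | h
    · exact Or.inl ⟨le_rfl, h⟩
    · exact Or.inr (Or.inr ⟨h, le_rfl⟩)

theorem cyc3_right (i k : Fin N) : cyc3 i k k := by
  unfold cyc3
  split_ifs with hik
  · exact hik.symm
  · rcases le_total i k with h | h
    · exact Or.inl ⟨h, le_rfl⟩
    · exact Or.inr (Or.inl ⟨le_rfl, h⟩)

section cprod

variable {P Q : Matrix (Fin N) (Fin N) ℂ} {i j₀ k : Fin N}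

theorem cprod_apply_of_col_eq_zero (hQ : ∀ j, j ≠ j₀ → Q j k = 0) (hj₀ : cyc3 i j₀ k) :
    cprod P Q i k = P i j₀ * Q j₀ k := by
  rw [cprod, of_apply]
  refine Finset.sum_eq_single_of_mem j₀ (Finset.mem_filter.2 ⟨Finset.mem_univ _, hj₀⟩) ?_
  intro j _ hj
  rw [hQ j hj, mul_zero]

theorem cprod_apply_of_row_eq_zero (hP : ∀ j, j ≠ j₀ → P i j = 0) (hj₀ : cyc3 i j₀ k) :
    cprod P Q i k = P i j₀ * Q j₀ k := by
  rw [cprod, of_apply]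
  refine Finset.sum_eq_single_of_mem j₀ (Finset.mem_filter.2 ⟨Finset.mem_univ _, hj₀⟩) ?_
  intro j _ hj
  rw [hP j hj, zero_mul]

end cprod

section linkMatrix

/-- The matrix `π̲ t` of the paper. -/
def linkMatrix (π : Equiv.Perm (Fin N)) (t : Fin N → ℂ) : Matrix (Fin N) (Fin N) ℂ :=
  Matrix.of fun a b => if b = π a ∧ b ≠ a then t b else 0

variable {π : Equiv.Perm (Fin N)} {t : Fin N → ℂ}

theorem linkMatrix_apply_of_ne {a b : Fin N} (h : b ≠ π a) : linkMatrix π t a b = 0 :=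
  if_neg fun h' => h h'.1

theorem linkMatrix_apply_perm_self {i : Fin N} (hπ : Function.Involutive π) (hi : π i ≠ i) :
    linkMatrix π t (π i) i = t i :=
  if_pos ⟨(hπ i).symm, fun h => hi h.symm⟩

end linkMatrix

theorem brauer_orbit_representative_unique_general (N : ℕ)
    (π : Equiv.Perm (Fin N)) (hinv : ∀ i, π (π i) = i)
    (t t' : Fin N → ℂ) (P : Matrix (Fin N) (Fin N) ℂ)
    (hP : ∀ i, P i i = 1)
    (h : cprod P (Matrix.of fun a b => if b = π a ∧ b ≠ a then t b else 0) =
         cprod (Matrix.of fun a b => if b = π a ∧ b ≠ a then t' b else 0) P) :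
    ∀ i : Fin N, π i ≠ i → t i = t' i := by
  intro i hi
  change cprod P (linkMatrix π t) = cprod (linkMatrix π t') P at h
  have hL : cprod P (linkMatrix π t) (π i) i = t i := by
    rw [cprod_apply_of_col_eq_zero ?_ (cyc3_left _ _), hP, linkMatrix_apply_perm_self hinv hi,
      one_mul]
    intro j hj
    exact linkMatrix_apply_of_ne fun hij => hj (by rw [hij, hinv])
  have hR : cprod (linkMatrix π t') P (π i) i = t' i := by
    rw [cprod_apply_of_row_eq_zero ?_ (cyc3_right _ _), hP, linkMatrix_apply_perm_self hinv hi,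
      mul_one]
    intro j hj
    exact linkMatrix_apply_of_ne (by rwa [hinv])
  rw [← hL, ← hR, h]

/-- Uniqueness of the diagonal representative in a `•`-conjugation orbit: write
`N = 2n + r`, `r ∈ {0,1}`, let `π` be a link pattern (involution with exactly `r` fixed
points) and let `π̲ t` denote the matrix with `(π̲ t)_{ij} = t_j` iff `j = π(i)`,
`j ≠ i`.  If `P` has all diagonal entries `1` and `P • (π̲ t) = (π̲ t') • P`, then
`t_i = t'_i` for every non-fixed point `i` of `π`; in particular each orbit of the group
`U = {P : P_{ii} = 1}` contains at most one matrix of the form `π̲ t`. -/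
theorem brauer_orbit_representative_unique (n r N : ℕ) (hr : r = 0 ∨ r = 1)
    (hN : N = 2 * n + r) (hpos : 0 < N)
    (π : Equiv.Perm (Fin N)) (hinv : ∀ i, π (π i) = i)
    (hfix : (Finset.univ.filter (fun i => π i = i)).card = r)
    (t t' : Fin N → ℂ) (P : Matrix (Fin N) (Fin N) ℂ)
    (hP : ∀ i, P i i = 1)
    (h : cprod P (Matrix.of fun a b => if b = π a ∧ b ≠ a then t b else 0) =
         cprod (Matrix.of fun a b => if b = π a ∧ b ≠ a then t' b else 0) P) :
    ∀ i : Fin N, π i ≠ i → t i = t' i :=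
  brauer_orbit_representative_unique_general N π hinv t t' P hP h
end

section
/- Write N = 2n + r with r ∈ {0,1} and n ≥ 1. Let M ∈ M_N(ℂ) have the block form M = [[A, X],[Y, B]], where A is an n×n strictly lower triangular block (rows and columns 1,…,n), B is an (n+r)×(n+r) strictly lower triangular block (rows and columns n+1,…,N), X is the n×(n+r) block in rows 1,…,n and columns n+1,…,N, and Y is the (n+r)×n block in rows n+1,…,N and columns 1,…,n. Then M • M = 0 if and only if both ordinary products XY and YX are upper triangular, i.e., (XY)_{ab} = 0 for all a > b and (YX)_{cd} = 0 for all c > d. (This identifies the permutation sector E_P of the Brauer loop scheme with the upper-upper scheme.) -/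
open Matrix BigOperators Finset

/-!
For `k < i` in the same diagonal block, every `j` in the other block satisfies `⟨i ≤ j ≤ k⟩`,
while for `j` in the same block with `⟨i ≤ j ≤ k⟩` one of `M i j`, `M j k` lies on or above the
diagonal of that strictly lower triangular block and vanishes. So these entries of `M • M` are
exactly the strictly lower entries of `XY` and `YX`. In the remaining positions (`i ≤ k`, or
`i` in the second block and `k` in the first) the same triangularity kills every term.
-/

variable {n N : ℕ} {M : Matrix (Fin N) (Fin N) ℂ} {i j k : Fin N}

lemma cyc3_iff_of_ne (hik : i ≠ k) :
    cyc3 i j k ↔ (i.val ≤ j.val ∧ j.val ≤ k.val) ∨ (j.val ≤ k.val ∧ k.val ≤ i.val) ∨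
      (k.val ≤ i.val ∧ i.val ≤ j.val) := by
  simp only [cyc3, if_neg hik, Fin.le_def]

lemma cprod_apply (P Q : Matrix (Fin N) (Fin N) ℂ) (i k : Fin N) :
    cprod P Q i k = ∑ j ∈ univ.filter (fun j => cyc3 i j k), P i j * Q j k := rfl

section FirstBlock

variable (hA : ∀ i j : Fin N, i.val < n → j.val < n → i.val ≤ j.val → M i j = 0)
include hA

lemma cprod_self_apply_eq_sum_of_lt_of_lt (hi : i.val < n)
    (hk : k.val < n) (hki : k.val < i.val) :
    cprod M M i k = ∑ j ∈ univ.filter (fun j : Fin N => n ≤ j.val), M i j * M j k := by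
  have hik : i ≠ k := Fin.ne_of_gt hki
  rw [cprod_apply]
  symm
  refine sum_subset (fun j hj => ?_) (fun j hj hj' => ?_)
  · simp only [mem_filter, mem_univ, true_and] at hj ⊢
    rw [cyc3_iff_of_ne hik]
    omega
  · simp only [mem_filter, mem_univ, true_and, not_le] at hj hj'
    rw [cyc3_iff_of_ne hik] at hj
    by_contra hne
    obtain ⟨hij, hjk⟩ := mul_ne_zero_iff.mp hne
    have := mt (hA i j hi hj') hij
    have := mt (hA j k hj' hk) hjk
    omega

end FirstBlock

section SecondBlock

variable (hB : ∀ i j : Fin N, n ≤ i.val → n ≤ j.val → i.val ≤ j.val → M i j = 0)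
include hB

lemma cprod_self_apply_eq_sum_of_le_of_le (hi : n ≤ i.val)
    (hk : n ≤ k.val) (hki : k.val < i.val) :
    cprod M M i k = ∑ j ∈ univ.filter (fun j : Fin N => j.val < n), M i j * M j k := by
  have hik : i ≠ k := Fin.ne_of_gt hki
  rw [cprod_apply]
  symm
  refine sum_subset (fun j hj => ?_) (fun j hj hj' => ?_)
  · simp only [mem_filter, mem_univ, true_and] at hj ⊢
    rw [cyc3_iff_of_ne hik]
    omega
  · simp only [mem_filter, mem_univ, true_and, not_lt] at hj hj'
    rw [cyc3_iff_of_ne hik] at hj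
    by_contra hne
    obtain ⟨hij, hjk⟩ := mul_ne_zero_iff.mp hne
    have := mt (hB i j hi hj') hij
    have := mt (hB j k hj' hk) hjk
    omega

end SecondBlock

section BothBlocks

variable (hA : ∀ i j : Fin N, i.val < n → j.val < n → i.val ≤ j.val → M i j = 0)
  (hB : ∀ i j : Fin N, n ≤ i.val → n ≤ j.val → i.val ≤ j.val → M i j = 0)
include hA hB

lemma lt_of_apply_ne_zero (h : M i j ≠ 0) (hij : i.val < n ↔ j.val < n) : j.val < i.val := by
  by_contra hle
  rw [not_lt] at hle
  by_cases hi : i.val < n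
  · exact h (hA i j hi (hij.mp hi) hle)
  · exact h (hB i j (by omega) (by omega) hle)

lemma mul_apply_eq_zero_of_cyc3 (hcyc : cyc3 i j k)
    (h : i.val ≤ k.val ∨ (n ≤ i.val ∧ k.val < n)) : M i j * M j k = 0 := by
  by_contra hne
  obtain ⟨hij, hjk⟩ := mul_ne_zero_iff.mp hne
  have := lt_of_apply_ne_zero hA hB hij
  have := lt_of_apply_ne_zero hA hB hjk
  by_cases hik : i = k
  · rw [cyc3, if_pos hik] at hcyc
    subst hcyc
    omega
  · rw [cyc3_iff_of_ne hik] at hcyc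
    omega

lemma cprod_self_apply_eq_zero (h : i.val ≤ k.val ∨ (n ≤ i.val ∧ k.val < n)) :
    cprod M M i k = 0 := by
  rw [cprod_apply]
  exact sum_eq_zero fun _ hj => mul_apply_eq_zero_of_cyc3 hA hB (mem_filter.mp hj).2 h

end BothBlocks

theorem brauer_permutation_sector_general (n N : ℕ) (M : Matrix (Fin N) (Fin N) ℂ)
    (hA : ∀ i j : Fin N, i.val < n → j.val < n → i.val ≤ j.val → M i j = 0)
    (hB : ∀ i j : Fin N, n ≤ i.val → n ≤ j.val → i.val ≤ j.val → M i j = 0) :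
    cprod M M = 0 ↔
      ((∀ a b : Fin N, a.val < n → b.val < n → b.val < a.val →
          ∑ c ∈ Finset.univ.filter (fun c : Fin N => n ≤ c.val), M a c * M c b = 0) ∧
       (∀ c d : Fin N, n ≤ c.val → n ≤ d.val → d.val < c.val →
          ∑ a ∈ Finset.univ.filter (fun a : Fin N => a.val < n), M c a * M a d = 0)) := by
  constructor
  · intro h
    exact ⟨fun a b ha hb hba =>
        (cprod_self_apply_eq_sum_of_lt_of_lt hA ha hb hba).symm.trans (congrFun₂ h a b),
      fun c d hc hd hdc =>
        (cprod_self_apply_eq_sum_of_le_of_le hB hc hd hdc).symm.trans (congrFun₂ h c d)⟩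
  · rintro ⟨hXY, hYX⟩
    ext i k
    rw [Matrix.zero_apply]
    rcases lt_or_ge k.val i.val with hki | hik
    · rcases lt_or_ge i.val n with hi | hi <;> rcases lt_or_ge k.val n with hk | hk
      · rw [cprod_self_apply_eq_sum_of_lt_of_lt hA hi hk hki]
        exact hXY i k hi hk hki
      · omega
      · exact cprod_self_apply_eq_zero hA hB (Or.inr ⟨hi, hk⟩)
      · rw [cprod_self_apply_eq_sum_of_le_of_le hB hi hk hki]
        exact hYX i k hi hk hki
    · exact cprod_self_apply_eq_zero hA hB (Or.inl hik)

/-- The permutation sector is the upper-upper scheme: write `N = 2n + r`, `r ∈ {0,1}`,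
`n ≥ 1`.  Suppose `M` has block form `[[A, X],[Y, B]]` where the diagonal blocks `A`
(indices `< n`) and `B` (indices `≥ n`) are strictly lower triangular.  Then
`M • M = 0` if and only if the ordinary products `XY` and `YX` are upper triangular,
i.e. `(XY)_{ab} = 0` for `a > b` and `(YX)_{cd} = 0` for `c > d`; here
`(XY)_{ab} = ∑_{c ≥ n} M_{ac} M_{cb}` for `a, b < n` and
`(YX)_{cd} = ∑_{a < n} M_{ca} M_{ad}` for `c, d ≥ n`. -/
theorem brauer_permutation_sector (n r N : ℕ) (hr : r = 0 ∨ r = 1) (hn : 1 ≤ n)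
    (hN : N = 2 * n + r)
    (M : Matrix (Fin N) (Fin N) ℂ)
    (hA : ∀ i j : Fin N, i.val < n → j.val < n → i.val ≤ j.val → M i j = 0)
    (hB : ∀ i j : Fin N, n ≤ i.val → n ≤ j.val → i.val ≤ j.val → M i j = 0) :
    cprod M M = 0 ↔
      ((∀ a b : Fin N, a.val < n → b.val < n → b.val < a.val →
          ∑ c ∈ Finset.univ.filter (fun c : Fin N => n ≤ c.val), M a c * M c b = 0) ∧
       (∀ c d : Fin N, n ≤ c.val → n ≤ d.val → d.val < c.val →
          ∑ a ∈ Finset.univ.filter (fun a : Fin N => a.val < n), M c a * M a d = 0)) :=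
  brauer_permutation_sector_general n N M hA hB
end
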